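/- arXiv:2007.05185 — 2 statements merged into one kernel-verified Lean document; each statement's English description precedes it below -/
import Mathlib

section
/- In the perfect-local-information one-step social distancing game, consider the strategy profile u* defined by u*^i_j = 1 if x_i = 1 or χ_j = 0, and u*^i_j = 0 if x_i = 0 and χ_j = 1 (i.e. u*^i_j = max{x_i, 1 − χ_j}). Assume that for every agent i with x_i = 0, writing Infected_i = {j ∈ N_i : χ_j = 1}, every nonempty subset S ⊆ Infected_i satisfies Σ_{j∈S} s_{ij} < G_i·(1 − (1 − p^c)^{|S|}). Then u* is a Nash equilibrium: no agent can strictly increase her payoff J_i by unilaterally changing her strategy u^i within [0,1]^{N_i}. -/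
open Finset

variable {V : Type*}

/-- The one-step payoff of agent `i` in the social distancing game with perfect local
information.  `Γ` is the social graph, `s` the sociability parameters, `Gv` the vulnerability
parameters, `pc` the contamination probability, `x` and `r` the health states, `R` the
recovery period and `u` the strategy profile (`u i j` is the strategy of `i` towards `j`). -/
noncomputable def payoff [Fintype V] [DecidableEq V] (Γ : SimpleGraph V) [DecidableRel Γ.Adj]
    (s : V → V → ℝ) (Gv : V → ℝ) (pc : ℝ) (x r : V → ℕ) (R : ℕ)
    (u : V → V → ℝ) (i : V) : ℝ :=
  (∑ j ∈ Γ.neighborFinset i, s i j * u i j * u j i) -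
    (Gv i * ((x i : ℝ) - 1) *
        (∏ j ∈ Γ.neighborFinset i,
          (1 - u i j * u j i * pc * (if x j = 1 ∧ r j < R then (1:ℝ) else 0))) + Gv i) *
      (if x i + r i < R then (1:ℝ) else 0)

/-- The strategy profile `u*` with `u*ᵢⱼ = max {xᵢ, 1 - χⱼ}`: an agent plays `1` towards a
neighbor iff she is herself infected/recovered or the neighbor is not contagious. -/
noncomputable def ustar (x r : V → ℕ) (R : ℕ) : V → V → ℝ := fun i j =>
  if x i = 1 ∨ ¬ (x j = 1 ∧ r j < R) then 1 else 0

lemma key_lemma {W : Type*} [DecidableEq W] (pc : ℝ) (hpc0 : 0 ≤ pc) (hpc1 : pc ≤ 1)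
    (s t : W → ℝ) (ht0 : ∀ j, 0 ≤ t j) (ht1 : ∀ j, t j ≤ 1) (T : Finset W) :
    ∀ G : ℝ, 0 ≤ G → ∃ S ⊆ T, (∑ j ∈ T, s j * t j) + G * ∏ j ∈ T, (1 - t j * pc) ≤
      (∑ j ∈ S, s j) + G * (1 - pc) ^ S.card := by
  induction T using Finset.induction_on with
  | empty => exact fun G hG => ⟨∅, Finset.Subset.refl _, by simp⟩
  | @insert a T ha ih =>
    intro G hG
    have hP : (0:ℝ) ≤ ∏ j ∈ T, (1 - t j * pc) :=
      Finset.prod_nonneg fun j _ => by nlinarith [ht0 j, ht1 j]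
    rw [Finset.sum_insert ha, Finset.prod_insert ha]
    by_cases hc : s a ≤ G * pc * ∏ j ∈ T, (1 - t j * pc)
    · obtain ⟨S, hS, hle⟩ := ih G hG
      refine ⟨S, hS.trans (Finset.subset_insert a T), ?_⟩
      have h1 : s a * t a + G * ((1 - t a * pc) * ∏ j ∈ T, (1 - t j * pc)) ≤
          G * ∏ j ∈ T, (1 - t j * pc) := by nlinarith [ht0 a, ht1 a]
      linarith
    · push_neg at hc
      obtain ⟨S, hS, hle⟩ := ih (G * (1 - pc)) (by nlinarith)
      have haS : a ∉ S := fun h => ha (hS h)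
      refine ⟨insert a S, Finset.insert_subset_insert a hS, ?_⟩
      rw [Finset.sum_insert haS, Finset.card_insert_of_notMem haS, pow_succ]
      have h1 : s a * t a + G * ((1 - t a * pc) * ∏ j ∈ T, (1 - t j * pc)) ≤
          s a + G * (1 - pc) * ∏ j ∈ T, (1 - t j * pc) := by
        nlinarith [ht0 a, ht1 a]
      have h2 : G * ((1 - pc) ^ S.card * (1 - pc)) = G * (1 - pc) * (1 - pc) ^ S.card := by ring
      rw [h2]
      linarith


/-- If every susceptible agent values any nonempty subset `S` of her contagious neighbors
less than the corresponding expected infection cost `Gᵢ·(1 - (1 - pᶜ)^|S|)`, then the profile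
`u*` is a Nash equilibrium: no agent can strictly increase her payoff by a unilateral
deviation in `[0,1]^{N_i}`. -/
theorem ustar_is_NE [Fintype V] [DecidableEq V]
    (Γ : SimpleGraph V) [DecidableRel Γ.Adj]
    (s : V → V → ℝ) (Gv : V → ℝ) (pc : ℝ) (x r : V → ℕ) (R : ℕ)
    (hs : ∀ i j, Γ.Adj i j → 0 < s i j) (hG : ∀ i, 0 < Gv i)
    (hpc : 0 < pc ∧ pc ≤ 1) (hx : ∀ i, x i ≤ 1) (hr : ∀ i, r i ≤ R)
    (hx0r : ∀ i, x i = 0 → r i = 0)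
    (hcost : ∀ i, x i = 0 →
      ∀ S ⊆ (Γ.neighborFinset i).filter (fun j => x j = 1 ∧ r j < R), S.Nonempty →
        ∑ j ∈ S, s i j < Gv i * (1 - (1 - pc) ^ S.card)) :
    ∀ i, ∀ u' : V → ℝ, (∀ j, u' j ∈ Set.Icc (0:ℝ) 1) →
      payoff Γ s Gv pc x r R (Function.update (ustar x r R) i u') i ≤
        payoff Γ s Gv pc x r R (ustar x r R) i := by
  intro i u' hu'
  have hne : ∀ j ∈ Γ.neighborFinset i, j ≠ i := by
    intro j hj
    exact (Γ.ne_of_adj ((Γ.mem_neighborFinset i j).mp hj)).symm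
  have hu0 : ∀ j, 0 ≤ u' j := fun j => (hu' j).1
  have hu1 : ∀ j, u' j ≤ 1 := fun j => (hu' j).2
  simp only [payoff]
  have hsum : ∑ j ∈ Γ.neighborFinset i,
      s i j * Function.update (ustar x r R) i u' i j * Function.update (ustar x r R) i u' j i
      = ∑ j ∈ Γ.neighborFinset i, s i j * u' j * ustar x r R j i := by
    refine Finset.sum_congr rfl fun j hj => ?_
    rw [Function.update_self, Function.update_of_ne (hne j hj)]
  have hprod : ∏ j ∈ Γ.neighborFinset i,
      (1 - Function.update (ustar x r R) i u' i j * Function.update (ustar x r R) i u' j i * pc *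
        (if x j = 1 ∧ r j < R then (1:ℝ) else 0))
      = ∏ j ∈ Γ.neighborFinset i,
      (1 - u' j * ustar x r R j i * pc * (if x j = 1 ∧ r j < R then (1:ℝ) else 0)) := by
    refine Finset.prod_congr rfl fun j hj => ?_
    rw [Function.update_self, Function.update_of_ne (hne j hj)]
  rw [hsum, hprod]
  by_cases hxi : x i = 1
  · -- infected agent: penalty independent of strategy
    have hx1 : ((x i : ℝ) - 1) = 0 := by rw [hxi]; norm_num
    simp only [hx1, mul_zero, zero_mul, zero_add]
    have hiu : ∀ j, ustar x r R i j = 1 := fun j => if_pos (Or.inl hxi)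
    refine sub_le_sub_right (Finset.sum_le_sum fun j hj => ?_) _
    rw [hiu j]
    have adj := (Γ.mem_neighborFinset i j).mp hj
    have hw : 0 ≤ ustar x r R j i := by unfold ustar; split_ifs <;> norm_num
    nlinarith [mul_nonneg (mul_nonneg (hs i j adj).le hw) (sub_nonneg.mpr (hu1 j))]
  · have hx0 : x i = 0 := by have := hx i; omega
    have hji : ∀ j, ustar x r R j i = 1 := fun j => if_pos (Or.inr fun h => hxi h.1)
    simp only [hji, mul_one]
    by_cases hRi : x i + r i < R
    · -- main case: susceptible and still infectable
      simp only [if_pos hRi, mul_one]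
      have hcast : ((x i : ℝ) - 1) = -1 := by rw [hx0]; norm_num
      rw [hcast]
      have hprod1 : ∏ j ∈ Γ.neighborFinset i,
          (1 - ustar x r R i j * pc * (if x j = 1 ∧ r j < R then (1:ℝ) else 0)) = 1 := by
        refine Finset.prod_eq_one fun j _ => ?_
        unfold ustar
        by_cases h : x j = 1 ∧ r j < R
        · simp [h, hxi]
        · simp [h]
      rw [hprod1]
      have hsum_star : ∑ j ∈ Γ.neighborFinset i, s i j * ustar x r R i j
          = ∑ j ∈ (Γ.neighborFinset i).filter (fun j => ¬ (x j = 1 ∧ r j < R)), s i j := by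
        rw [Finset.sum_filter]
        refine Finset.sum_congr rfl fun j _ => ?_
        unfold ustar
        by_cases h : x j = 1 ∧ r j < R
        · simp [h, hxi]
        · simp [h]
      rw [hsum_star]
      -- split the deviation sum and product over contagious / non-contagious neighbors
      have hprodsplit : ∏ j ∈ Γ.neighborFinset i,
          (1 - u' j * pc * (if x j = 1 ∧ r j < R then (1:ℝ) else 0))
          = ∏ j ∈ (Γ.neighborFinset i).filter (fun j => x j = 1 ∧ r j < R), (1 - u' j * pc) := by
        rw [← Finset.prod_filter_mul_prod_filter_not (Γ.neighborFinset i)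
          (fun j => x j = 1 ∧ r j < R)]
        have h2 : ∏ j ∈ (Γ.neighborFinset i).filter (fun j => ¬ (x j = 1 ∧ r j < R)),
            (1 - u' j * pc * (if x j = 1 ∧ r j < R then (1:ℝ) else 0)) = 1 := by
          refine Finset.prod_eq_one fun j hj => ?_
          have := (Finset.mem_filter.mp hj).2
          simp [this]
        rw [h2, mul_one]
        refine Finset.prod_congr rfl fun j hj => ?_
        have := (Finset.mem_filter.mp hj).2
        simp [this]
      rw [hprodsplit]
      have hsumsplit : ∑ j ∈ Γ.neighborFinset i, s i j * u' j
          = (∑ j ∈ (Γ.neighborFinset i).filter (fun j => x j = 1 ∧ r j < R), s i j * u' j)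
          + ∑ j ∈ (Γ.neighborFinset i).filter (fun j => ¬ (x j = 1 ∧ r j < R)), s i j * u' j :=
        (Finset.sum_filter_add_sum_filter_not _ _ _).symm
      rw [hsumsplit]
      obtain ⟨S, hS, hkey⟩ := key_lemma pc hpc.1.le hpc.2 (s i) u' hu0 hu1
        ((Γ.neighborFinset i).filter (fun j => x j = 1 ∧ r j < R)) (Gv i) (hG i).le
      have hSle : (∑ j ∈ S, s i j) + Gv i * (1 - pc) ^ S.card ≤ Gv i := by
        rcases S.eq_empty_or_nonempty with h | h
        · simp [h]
        · have hc := hcost i hx0 S hS h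
          have : Gv i * (1 - (1 - pc) ^ S.card) = Gv i - Gv i * (1 - pc) ^ S.card := by ring
          linarith [hc, this ▸ hc]
      have hNot : ∑ j ∈ (Γ.neighborFinset i).filter (fun j => ¬ (x j = 1 ∧ r j < R)), s i j * u' j
          ≤ ∑ j ∈ (Γ.neighborFinset i).filter (fun j => ¬ (x j = 1 ∧ r j < R)), s i j := by
        refine Finset.sum_le_sum fun j hj => ?_
        have adj := (Γ.mem_neighborFinset i j).mp (Finset.mem_filter.mp hj).1
        nlinarith [hs i j adj, hu0 j, hu1 j]
      linarith
    · -- susceptible but past recovery window: R = 0, nobody contagious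
      simp only [if_neg hRi, mul_zero, sub_zero]
      have hR0 : R = 0 := by have := hx0r i hx0; omega
      refine Finset.sum_le_sum fun j hj => ?_
      have hiu : ustar x r R i j = 1 := if_pos (Or.inr fun h => by omega)
      rw [hiu]
      have adj := (Γ.mem_neighborFinset i j).mp hj
      nlinarith [hs i j adj, hu0 j, hu1 j]
end

section
/- For the statistical-information expected payoff Ĵ_i, the maximum over the agent's own meeting probability is attained at an endpoint: for every p ∈ [0,1], Ĵ_i(p) ≤ max(Ĵ_i(0), Ĵ_i(1)). Hence in any equilibrium of the statistical-information game each agent's strategy can be taken to be either full isolation (p = 0) or no social distancing at all (p = 1). -/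
open Finset

lemma prod_convex (m : ℕ) (t : Finset (Fin m)) (a : Fin m → ℝ)
    (ha : ∀ j, a j ∈ Set.Icc (0:ℝ) 1) :
    ConvexOn ℝ (Set.Icc (0:ℝ) 1) (fun p => ∏ j ∈ t, (1 - p * a j)) := by
  classical
  induction t using Finset.induction with
  | empty => simpa using convexOn_const (1:ℝ) (convex_Icc 0 1)
  | @insert i t hi ih =>
    have hfac_nn : ∀ (u : Finset (Fin m)) (p : ℝ), p ∈ Set.Icc (0:ℝ) 1 →
        0 ≤ ∏ j ∈ u, (1 - p * a j) := by
      intro u p hp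
      refine Finset.prod_nonneg fun j _ => ?_
      have := (ha j).1; have := (ha j).2
      nlinarith [hp.1, hp.2]
    have hfac_anti : ∀ (u : Finset (Fin m)), AntitoneOn
        (fun p => ∏ j ∈ u, (1 - p * a j)) (Set.Icc (0:ℝ) 1) := by
      intro u p hp r hr hpr
      refine Finset.prod_le_prod (fun j _ => ?_) (fun j _ => ?_)
      · have := (ha j).1; have := (ha j).2
        nlinarith [hr.1, hr.2]
      · have := (ha j).1
        nlinarith
    have hconv1 : ConvexOn ℝ (Set.Icc (0:ℝ) 1) (fun p => 1 - p * a i) := by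
      refine ⟨convex_Icc 0 1, fun x _ y _ α β hα hβ hαβ => ?_⟩
      have hβ' : β = 1 - α := by linarith
      subst hβ'
      simp only [smul_eq_mul]
      exact le_of_eq (by ring)
    rw [show (fun p => ∏ j ∈ insert i t, (1 - p * a j)) =
        (fun p => 1 - p * a i) * (fun p => ∏ j ∈ t, (1 - p * a j)) by
      funext p; simp [Finset.prod_insert hi]]
    refine hconv1.mul ih (fun p hp => ?_) (fun p hp => hfac_nn t p hp) ?_
    · have := hfac_nn {i} p hp; simpa using this
    · intro x hx y hy hlt
      rcases le_total x y with h | h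
      · exact absurd hlt (not_lt.2 (hfac_anti t hx hy h))
      · have := hfac_anti {i} hy hx h
        simpa using this


/-- The statistical-information expected payoff of a single agent with degree `m`,
opponents' meeting probabilities `q`, sociability `s`, vulnerability `G`, infected
fraction `px`, recovered fraction `pr` and contamination probability `pc`, as a function
of her own meeting probability `p`. -/
noncomputable def Jhat (m : ℕ) (q : Fin m → ℝ) (s G px pr pc : ℝ) (p : ℝ) : ℝ :=
  s * p * (∑ j, q j) +
    G * (1 - pr) * ((1 - px) * (∏ j, (1 - p * q j * pc * px * (1 - pr))) - 1)

/-- The maximum of the statistical-information expected payoff over the agent's own meeting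
probability is attained at an endpoint: either full isolation (`p = 0`) or no social
distancing at all (`p = 1`). -/
theorem Jhat_le_max_endpoints (m : ℕ) (q : Fin m → ℝ) (hq : ∀ j, q j ∈ Set.Icc (0:ℝ) 1)
    (s G px pr pc : ℝ) (hs : 0 ≤ s) (hG : 0 < G)
    (hpx : px ∈ Set.Ico (0:ℝ) 1) (hpr : pr ∈ Set.Ico (0:ℝ) 1)
    (hpc : pc ∈ Set.Icc (0:ℝ) 1) :
    ∀ p ∈ Set.Icc (0:ℝ) 1,
      Jhat m q s G px pr pc p ≤
        max (Jhat m q s G px pr pc 0) (Jhat m q s G px pr pc 1) := by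
  intro p hp
  set a : Fin m → ℝ := fun j => q j * pc * px * (1 - pr) with ha_def
  have ha : ∀ j, a j ∈ Set.Icc (0:ℝ) 1 := by
    intro j
    have h1 := (hq j).1; have h2 := (hq j).2
    have h3 := hpc.1; have h4 := hpc.2
    have h5 := hpx.1; have h6 := hpx.2
    have h7 := hpr.1; have h8 := hpr.2
    simp only [ha_def]
    have h9 : (0:ℝ) ≤ 1 - pr := by linarith
    constructor
    · positivity
    · have hA : q j * pc ≤ 1 := mul_le_one₀ h2 h3 h4
      have hB : q j * pc * px ≤ 1 := mul_le_one₀ hA h5 h6.le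
      exact mul_le_one₀ hB h9 (by linarith)
  have hconvP := prod_convex m Finset.univ a ha
  -- linear part
  have hQ : 0 ≤ ∑ j, q j := Finset.sum_nonneg fun j _ => (hq j).1
  have hC : 0 ≤ G * (1 - pr) * (1 - px) := by
    have h1 : (0:ℝ) < 1 - pr := by linarith [hpr.2]
    have h2 : (0:ℝ) < 1 - px := by linarith [hpx.2]
    positivity
  have hlin : ConvexOn ℝ (Set.Icc (0:ℝ) 1) (fun p : ℝ => s * p * (∑ j, q j)) := by
    refine ⟨convex_Icc 0 1, fun x _ y _ α β hα hβ hαβ => ?_⟩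
    simp only [smul_eq_mul]
    exact le_of_eq (by ring)
  have hconv : ConvexOn ℝ (Set.Icc (0:ℝ) 1) (Jhat m q s G px pr pc) := by
    have h1 : ConvexOn ℝ (Set.Icc (0:ℝ) 1)
        (fun p : ℝ => (G * (1 - pr) * (1 - px)) • ∏ j, (1 - p * a j)) :=
      ConvexOn.smul hC hconvP
    have h2 := (hlin.add h1).add (convexOn_const (-(G * (1 - pr))) (convex_Icc 0 1))
    convert h2 using 1
    · rfl
    funext x
    simp only [Pi.add_apply, Jhat, smul_eq_mul, ha_def]
    have hprod : ∏ j, (1 - x * q j * pc * px * (1 - pr))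
        = ∏ j, (1 - x * (q j * pc * px * (1 - pr))) :=
      Finset.prod_congr rfl (fun j _ => by ring)
    rw [hprod]
    ring
  have hseg : p ∈ segment ℝ (0:ℝ) 1 := by
    rwa [segment_eq_Icc zero_le_one]
  exact hconv.le_on_segment (by constructor <;> norm_num) (by constructor <;> norm_num) hseg
end
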